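/- If X ∈ L(K ⊗ H) and X' ∈ L(K' ⊗ H) are representations of a multiplicative unitary V ∈ L(H ⊗ H), then the unitary X'₂₃ X₁₃ ∈ L(K ⊗ K' ⊗ H) is a representation of V (the tensor product representation). -/
import Mathlib


/- The tensor product of two representations of a multiplicative unitary is a representation.
Algebraic tensor products of inner product spaces are used; unitaries are modelled by
linear equivalences. -/

open TensorProduct

noncomputable section

variable {K H W : Type*}
  [AddCommGroup K] [Module ℂ K] [AddCommGroup H] [Module ℂ H] [AddCommGroup W] [Module ℂ W]

/-- Leg operator `X₁₂`: the operator `X ⊗ 1` on `K ⊗ H ⊗ W`, for `X` acting on `K ⊗ H`. -/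
def leg12 (X : K ⊗[ℂ] H →ₗ[ℂ] K ⊗[ℂ] H) :
    K ⊗[ℂ] (H ⊗[ℂ] W) →ₗ[ℂ] K ⊗[ℂ] (H ⊗[ℂ] W) :=
  (TensorProduct.assoc ℂ K H W).toLinearMap ∘ₗ (X.rTensor W) ∘ₗ
    (TensorProduct.assoc ℂ K H W).symm.toLinearMap

/-- Leg operator `V₂₃`: the operator `1 ⊗ V` on `K ⊗ H ⊗ W`, for `V` acting on `H ⊗ W`. -/
def leg23 (V : H ⊗[ℂ] W →ₗ[ℂ] H ⊗[ℂ] W) :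
    K ⊗[ℂ] (H ⊗[ℂ] W) →ₗ[ℂ] K ⊗[ℂ] (H ⊗[ℂ] W) :=
  V.lTensor K

/-- Leg operator `X₁₃` on `K ⊗ H ⊗ W`, for `X` acting on `K ⊗ W`: conjugate `X₁₂` by the
flip of the last two legs (equivalently, `(σ⊗1)(1⊗X)(σ⊗1)` in the usual conventions). -/
def leg13 (X : K ⊗[ℂ] W →ₗ[ℂ] K ⊗[ℂ] W) :
    K ⊗[ℂ] (H ⊗[ℂ] W) →ₗ[ℂ] K ⊗[ℂ] (H ⊗[ℂ] W) :=
  ((TensorProduct.comm ℂ W H).toLinearMap.lTensor K) ∘ₗ (leg12 X) ∘ₗ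
    ((TensorProduct.comm ℂ H W).toLinearMap.lTensor K)


section AuxLemmas

lemma leg12_comp' {K H W : Type*}
    [AddCommGroup K] [Module ℂ K] [AddCommGroup H] [Module ℂ H] [AddCommGroup W] [Module ℂ W]
    (F G : K ⊗[ℂ] H →ₗ[ℂ] K ⊗[ℂ] H) :
    leg12 (W := W) (F ∘ₗ G) = leg12 F ∘ₗ leg12 G := by
  ext x
  simp [leg12, LinearMap.rTensor_comp]

lemma leg23_comp' {K H W : Type*}
    [AddCommGroup K] [Module ℂ K] [AddCommGroup H] [Module ℂ H] [AddCommGroup W] [Module ℂ W]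
    (F G : H ⊗[ℂ] W →ₗ[ℂ] H ⊗[ℂ] W) :
    leg23 (K := K) (F ∘ₗ G) = leg23 F ∘ₗ leg23 G := by
  ext x
  simp [leg23, LinearMap.lTensor_comp]

lemma leg13_comp' {K H W : Type*}
    [AddCommGroup K] [Module ℂ K] [AddCommGroup H] [Module ℂ H] [AddCommGroup W] [Module ℂ W]
    (F G : K ⊗[ℂ] W →ₗ[ℂ] K ⊗[ℂ] W) :
    leg13 (H := H) (F ∘ₗ G) = leg13 F ∘ₗ leg13 G := by
  ext k h w
  simp only [leg13, leg12, LinearMap.coe_comp, Function.comp_apply, LinearEquiv.coe_coe,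
    AlgebraTensorModule.curry_apply, curry_apply, LinearMap.coe_restrictScalars,
    LinearMap.lTensor_tmul, TensorProduct.comm_tmul, TensorProduct.assoc_symm_tmul,
    LinearMap.rTensor_tmul, TensorProduct.assoc_tmul]
  generalize G (k ⊗ₜ[ℂ] w) = z
  induction z using TensorProduct.induction_on with
  | zero => simp
  | tmul a b => simp
  | add u v hu hv => simp only [add_tmul, map_add, hu, hv]

lemma leg13_leg23' {K B H W : Type*}
    [AddCommGroup K] [Module ℂ K] [AddCommGroup B] [Module ℂ B]
    [AddCommGroup H] [Module ℂ H] [AddCommGroup W] [Module ℂ W]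
    (g : H ⊗[ℂ] W →ₗ[ℂ] H ⊗[ℂ] W) :
    leg13 (K := K) (H := B) (leg23 (K := K) g) = leg23 (K := K) (leg23 (K := B) g) := by
  ext k b h w
  simp only [leg13, leg12, leg23, LinearMap.coe_comp, Function.comp_apply, LinearEquiv.coe_coe,
    AlgebraTensorModule.curry_apply, curry_apply, LinearMap.coe_restrictScalars,
    LinearMap.lTensor_tmul, TensorProduct.comm_tmul, TensorProduct.assoc_symm_tmul,
    LinearMap.rTensor_tmul, TensorProduct.assoc_tmul]

variable {A B C D : Type*} [AddCommGroup A] [Module ℂ A] [AddCommGroup B] [Module ℂ B]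
  [AddCommGroup C] [Module ℂ C] [AddCommGroup D] [Module ℂ D]

/-- regrouping `A ⊗ (B ⊗ (C ⊗ D)) ≃ (A ⊗ C) ⊗ (B ⊗ D)` -/
def e4 : A ⊗[ℂ] (B ⊗[ℂ] (C ⊗[ℂ] D)) ≃ₗ[ℂ] (A ⊗[ℂ] C) ⊗[ℂ] (B ⊗[ℂ] D) :=
  (TensorProduct.assoc ℂ A B (C ⊗[ℂ] D)).symm ≪≫ₗ TensorProduct.tensorTensorTensorComm ℂ A B C D

lemma op13_eq (F : A ⊗[ℂ] C →ₗ[ℂ] A ⊗[ℂ] C) :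
    leg13 (H := B) (leg12 (W := D) F)
      = e4.symm.toLinearMap ∘ₗ F.rTensor (B ⊗[ℂ] D) ∘ₗ e4.toLinearMap := by
  ext a b c d
  simp only [leg13, leg12, e4, LinearMap.coe_comp, Function.comp_apply, LinearEquiv.coe_coe,
    AlgebraTensorModule.curry_apply, curry_apply, LinearMap.coe_restrictScalars,
    LinearMap.lTensor_tmul, TensorProduct.comm_tmul, TensorProduct.assoc_symm_tmul,
    LinearMap.rTensor_tmul, TensorProduct.assoc_tmul, LinearEquiv.trans_apply,
    LinearEquiv.symm_symm, LinearEquiv.symm_trans_apply, tensorTensorTensorComm_tmul]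
  generalize F (a ⊗ₜ[ℂ] c) = z
  induction z using TensorProduct.induction_on with
  | zero => simp
  | tmul x y => simp
  | add u v hu hv => simp only [add_tmul, map_add, hu, hv]

lemma op24_eq (G : B ⊗[ℂ] D →ₗ[ℂ] B ⊗[ℂ] D) :
    leg23 (K := A) (leg13 (H := C) G)
      = e4.symm.toLinearMap ∘ₗ G.lTensor (A ⊗[ℂ] C) ∘ₗ e4.toLinearMap := by
  ext a b c d
  simp only [leg23, leg13, leg12, e4, LinearMap.coe_comp, Function.comp_apply, LinearEquiv.coe_coe,
    AlgebraTensorModule.curry_apply, curry_apply, LinearMap.coe_restrictScalars,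
    LinearMap.lTensor_tmul, TensorProduct.comm_tmul, TensorProduct.assoc_symm_tmul,
    LinearMap.rTensor_tmul, TensorProduct.assoc_tmul, LinearEquiv.trans_apply,
    LinearEquiv.symm_symm, LinearEquiv.symm_trans_apply, tensorTensorTensorComm_tmul]
  generalize G (b ⊗ₜ[ℂ] d) = z
  induction z using TensorProduct.induction_on with
  | zero => simp
  | tmul x y => simp
  | add u v hu hv => simp only [add_tmul, tmul_add, map_add, hu, hv]

lemma comm_13_24 (F : A ⊗[ℂ] C →ₗ[ℂ] A ⊗[ℂ] C) (G : B ⊗[ℂ] D →ₗ[ℂ] B ⊗[ℂ] D) :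
    leg13 (H := B) (leg12 (W := D) F) ∘ₗ leg23 (K := A) (leg13 (H := C) G)
      = leg23 (K := A) (leg13 (H := C) G) ∘ₗ leg13 (H := B) (leg12 (W := D) F) := by
  rw [op13_eq, op24_eq]
  refine LinearMap.ext fun t => ?_
  simp only [LinearMap.comp_apply, LinearEquiv.coe_coe, LinearEquiv.apply_symm_apply]
  congr 1
  rw [← LinearMap.comp_apply, ← LinearMap.comp_apply, LinearMap.rTensor_comp_lTensor,
    LinearMap.lTensor_comp_rTensor]

end AuxLemmas

section ConjLemmas

variable {A B C : Type*} [AddCommGroup A] [Module ℂ A] [AddCommGroup B] [Module ℂ B]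
  [AddCommGroup C] [Module ℂ C]

lemma coher4 {M P : Type*} [AddCommGroup M] [Module ℂ M] [AddCommGroup P] [Module ℂ P]
    (x : A) (z : B ⊗[ℂ] M) (p : P) :
    TensorProduct.assoc ℂ (A ⊗[ℂ] B) M P ((TensorProduct.assoc ℂ A B M).symm (x ⊗ₜ[ℂ] z) ⊗ₜ[ℂ] p)
      = (TensorProduct.assoc ℂ A B (M ⊗[ℂ] P)).symm
          (x ⊗ₜ[ℂ] (TensorProduct.assoc ℂ B M P (z ⊗ₜ[ℂ] p))) := by
  induction z using TensorProduct.induction_on with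
  | zero => simp
  | tmul u v => simp
  | add u v hu hv => simp only [add_tmul, tmul_add, map_add, hu, hv]

lemma coher5 {M P : Type*} [AddCommGroup M] [Module ℂ M] [AddCommGroup P] [Module ℂ P]
    (g : M →ₗ[ℂ] P) (x : A) (w : B ⊗[ℂ] M) :
    (g.lTensor (A ⊗[ℂ] B)) ((TensorProduct.assoc ℂ A B M).symm (x ⊗ₜ[ℂ] w))
      = (TensorProduct.assoc ℂ A B P).symm (x ⊗ₜ[ℂ] (g.lTensor B w)) := by
  induction w using TensorProduct.induction_on with
  | zero => simp
  | tmul u v => simp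
  | add u v hu hv => simp only [add_tmul, tmul_add, map_add, hu, hv]

lemma conj_leg23 {M P : Type*} [AddCommGroup M] [Module ℂ M] [AddCommGroup P] [Module ℂ P]
    (g : M ⊗[ℂ] P →ₗ[ℂ] M ⊗[ℂ] P) :
    leg23 (K := A ⊗[ℂ] B) g
      = (TensorProduct.assoc ℂ A B (M ⊗[ℂ] P)).symm.toLinearMap ∘ₗ
        (leg23 (K := A) (leg23 (K := B) g))
        ∘ₗ (TensorProduct.assoc ℂ A B (M ⊗[ℂ] P)).toLinearMap := by
  ext a b m p
  simp only [leg23, LinearMap.coe_comp, Function.comp_apply, LinearEquiv.coe_coe,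
    AlgebraTensorModule.curry_apply, curry_apply, LinearMap.coe_restrictScalars,
    LinearMap.lTensor_tmul, TensorProduct.assoc_tmul, TensorProduct.assoc_symm_tmul]

lemma conj_leg12_Y (X : A ⊗[ℂ] C →ₗ[ℂ] A ⊗[ℂ] C) (X' : B ⊗[ℂ] C →ₗ[ℂ] B ⊗[ℂ] C) :
    leg12 (W := C) ((TensorProduct.assoc ℂ A B C).symm.toLinearMap ∘ₗ
        (leg23 X' ∘ₗ leg13 X) ∘ₗ (TensorProduct.assoc ℂ A B C).toLinearMap)
      = (TensorProduct.assoc ℂ A B (C ⊗[ℂ] C)).symm.toLinearMap ∘ₗ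
        (leg23 (K := A) (leg12 (W := C) X') ∘ₗ leg13 (H := B) (leg12 (W := C) X)) ∘ₗ
        (TensorProduct.assoc ℂ A B (C ⊗[ℂ] C)).toLinearMap := by
  ext a b c₁ c₂
  simp only [leg23, leg13, leg12, LinearMap.coe_comp, Function.comp_apply, LinearEquiv.coe_coe,
    AlgebraTensorModule.curry_apply, curry_apply, LinearMap.coe_restrictScalars,
    LinearMap.lTensor_tmul, TensorProduct.comm_tmul, TensorProduct.assoc_symm_tmul,
    LinearMap.rTensor_tmul, TensorProduct.assoc_tmul]
  generalize X (a ⊗ₜ[ℂ] c₁) = z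
  induction z using TensorProduct.induction_on with
  | zero => simp
  | tmul x y =>
    simp only [TensorProduct.assoc_tmul, LinearMap.lTensor_tmul, TensorProduct.comm_tmul,
      TensorProduct.assoc_symm_tmul, LinearMap.rTensor_tmul]
    rw [coher4]
    simp
  | add u v hu hv => simp only [add_tmul, tmul_add, map_add, hu, hv]

lemma conj_leg13_Y (X : A ⊗[ℂ] C →ₗ[ℂ] A ⊗[ℂ] C) (X' : B ⊗[ℂ] C →ₗ[ℂ] B ⊗[ℂ] C) :
    leg13 (H := C) ((TensorProduct.assoc ℂ A B C).symm.toLinearMap ∘ₗ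
        (leg23 X' ∘ₗ leg13 X) ∘ₗ (TensorProduct.assoc ℂ A B C).toLinearMap)
      = (TensorProduct.assoc ℂ A B (C ⊗[ℂ] C)).symm.toLinearMap ∘ₗ
        (leg23 (K := A) (leg13 (H := C) X') ∘ₗ leg13 (H := B) (leg13 (H := C) X)) ∘ₗ
        (TensorProduct.assoc ℂ A B (C ⊗[ℂ] C)).toLinearMap := by
  ext a b c₁ c₂
  simp only [leg23, leg13, leg12, LinearMap.coe_comp, Function.comp_apply, LinearEquiv.coe_coe,
    AlgebraTensorModule.curry_apply, curry_apply, LinearMap.coe_restrictScalars,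
    LinearMap.lTensor_tmul, TensorProduct.comm_tmul, TensorProduct.assoc_symm_tmul,
    LinearMap.rTensor_tmul, TensorProduct.assoc_tmul]
  generalize X (a ⊗ₜ[ℂ] c₂) = z
  induction z using TensorProduct.induction_on with
  | zero => simp
  | tmul x y =>
    simp only [TensorProduct.assoc_tmul, LinearMap.lTensor_tmul, TensorProduct.comm_tmul,
      TensorProduct.assoc_symm_tmul, LinearMap.rTensor_tmul]
    rw [coher4, coher5]
    simp
  | add u v hu hv => simp only [add_tmul, tmul_add, map_add, hu, hv]

end ConjLemmas

/-- If `X ∈ L(K ⊗ H)` and `X' ∈ L(K' ⊗ H)` are representations of a multiplicative unitary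
`V ∈ L(H ⊗ H)`, then `X'₂₃ X₁₃ ∈ L(K ⊗ K' ⊗ H)` is a representation of `V`. -/
theorem tensorProduct_of_representations
    (H K K' : Type*) [NormedAddCommGroup H] [InnerProductSpace ℂ H]
    [NormedAddCommGroup K] [InnerProductSpace ℂ K]
    [NormedAddCommGroup K'] [InnerProductSpace ℂ K']
    (V : H ⊗[ℂ] H ≃ₗ[ℂ] H ⊗[ℂ] H)
    (hpent : leg12 V.toLinearMap ∘ₗ leg13 V.toLinearMap ∘ₗ leg23 V.toLinearMap
      = leg23 V.toLinearMap ∘ₗ leg12 V.toLinearMap)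
    (X : K ⊗[ℂ] H ≃ₗ[ℂ] K ⊗[ℂ] H)
    (hX : leg12 X.toLinearMap ∘ₗ leg13 X.toLinearMap ∘ₗ leg23 V.toLinearMap
      = leg23 V.toLinearMap ∘ₗ leg12 X.toLinearMap)
    (X' : K' ⊗[ℂ] H ≃ₗ[ℂ] K' ⊗[ℂ] H)
    (hX' : leg12 X'.toLinearMap ∘ₗ leg13 X'.toLinearMap ∘ₗ leg23 V.toLinearMap
      = leg23 V.toLinearMap ∘ₗ leg12 X'.toLinearMap)
    -- the tensor product representation `X'₂₃ X₁₃`, rebracketed to act on `(K ⊗ K') ⊗ H`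
    (Y : (K ⊗[ℂ] K') ⊗[ℂ] H →ₗ[ℂ] (K ⊗[ℂ] K') ⊗[ℂ] H)
    (hY : Y = (TensorProduct.assoc ℂ K K' H).symm.toLinearMap ∘ₗ
      (leg23 X'.toLinearMap ∘ₗ leg13 X.toLinearMap) ∘ₗ
      (TensorProduct.assoc ℂ K K' H).toLinearMap) :
    leg12 Y ∘ₗ leg13 Y ∘ₗ leg23 V.toLinearMap = leg23 V.toLinearMap ∘ₗ leg12 Y := by
  subst hY
  rw [conj_leg12_Y, conj_leg13_Y, conj_leg23]
  -- abbreviations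
  set A13 := leg13 (H := K') (leg12 (W := H) X.toLinearMap) with hA13
  set A14 := leg13 (H := K') (leg13 (H := H) X.toLinearMap) with hA14
  set A23 := leg23 (K := K) (leg12 (W := H) X'.toLinearMap) with hA23
  set A24 := leg23 (K := K) (leg13 (H := H) X'.toLinearMap) with hA24
  set V34 := leg23 (K := K) (leg23 (K := K') V.toLinearMap) with hV34
  -- the lifted pentagon for X
  have pX : ∀ u, A13 (A14 (V34 u)) = V34 (A13 u) := by
    have h := congrArg (fun T => leg13 (K := K) (H := K') (W := H ⊗[ℂ] H) T) hX
    simp only [leg13_comp'] at h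
    rw [leg13_leg23'] at h
    intro u
    have := congrFun (congrArg DFunLike.coe h) u
    simpa [hA13, hA14, hV34] using this
  -- the lifted pentagon for X'
  have pX' : ∀ u, A23 (A24 (V34 u)) = V34 (A23 u) := by
    have h := congrArg (fun T => leg23 (K := K) T) hX'
    simp only [leg23_comp'] at h
    intro u
    have := congrFun (congrArg DFunLike.coe h) u
    simpa [hA23, hA24, hV34] using this
  -- commutation of the disjoint legs
  have pc : ∀ u, A13 (A24 u) = A24 (A13 u) := by
    intro u
    have := congrFun (congrArg DFunLike.coe
      (comm_13_24 X.toLinearMap X'.toLinearMap)) u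
    simpa [hA13, hA24] using this
  refine LinearMap.ext fun t => ?_
  simp only [LinearMap.comp_apply, LinearEquiv.coe_coe, LinearEquiv.apply_symm_apply]
  congr 1
  rw [pc, pX, pX']


end
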